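/- arXiv:2306.05538 — 2 statements merged into one kernel-verified Lean document; each statement's English description precedes it below -/
import Mathlib

section
/- Let P_• be a flag of polyhedra in ℝⁿ with c(P_•) simplicial, and let ⪯ = ⪯_{P_•} be the associated preorder on Γ×ℤⁿ. Then ⪯ is antisymmetric (i.e. 𝔲 ⪯ 𝔳 and 𝔳 ⪯ 𝔲 together imply 𝔲 = 𝔳, so that ⪯ is a valuated monomial order) if and only if there exists a complete flag of polyhedra P_•' = (P'_0 ⊆ P'_1 ⊆ ⋯ ⊆ P'_n) in ℝⁿ (of length n = dim ℝⁿ) with c(P_•') simplicial and ⪯ = ⪯_{P_•'}. -/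
open Finset

noncomputable section

/-- The pairing `⟨w,𝔲⟩ = rγ + ⟨x,u⟩` on `ℝ × ℝⁿ`. -/
def pairE {n : ℕ} (w u : ℝ × (Fin n → ℝ)) : ℝ :=
  w.1 * u.1 + ∑ i, w.2 i * u.2 i

/-- The standard pairing between `ℝⁿ` and `ℤⁿ`. -/
def pairZ {n : ℕ} (x : Fin n → ℝ) (u : Fin n → ℤ) : ℝ :=
  ∑ i, x i * (u i : ℝ)

/-- The cone generated by finitely many vectors. -/
def coneGen {V : Type*} [AddCommMonoid V] [Module ℝ V] {r : ℕ} (v : Fin r → V) : Set V :=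
  {x | ∃ lam : Fin r → ℝ, (∀ j, 0 ≤ lam j) ∧ x = ∑ j, lam j • v j}

/-- The cone generated by `v 0, …, v i` (out of the family `v`). -/
def coneGenUpTo {V : Type*} [AddCommMonoid V] [Module ℝ V] {r : ℕ} (v : Fin r → V) (i : ℕ) :
    Set V :=
  {x | ∃ lam : Fin r → ℝ, (∀ j, 0 ≤ lam j) ∧ (∀ j : Fin r, i < (j : ℕ) → lam j = 0) ∧
    x = ∑ j, lam j • v j}

/-- A strongly convex polyhedral cone: finitely generated and containing no line. -/
def IsSCPCone {V : Type*} [AddCommGroup V] [Module ℝ V] (C : Set V) : Prop :=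
  (∃ r : ℕ, ∃ v : Fin r → V, C = coneGen v) ∧ ∀ x ∈ C, -x ∈ C → x = 0

/-- The dimension of a subset of a vector space: dimension of its linear span. -/
def spanDim {V : Type*} [AddCommGroup V] [Module ℝ V] (C : Set V) : ℕ :=
  Module.finrank ℝ (Submodule.span ℝ C)

/-- `flagPrev C i` is `C (i-1)`, with the convention `C (-1) = {0}`. -/
def flagPrev {V : Type*} [Zero V] (C : ℕ → Set V) : ℕ → Set V
  | 0 => {0}
  | (i + 1) => C i

/-- A flag of cones `C 0 ⊆ ⋯ ⊆ C k` in `ℝ≥0 × ℝⁿ`, with `dim (C i) = i + 1`. -/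
def IsFlagOfCones (n k : ℕ) (C : ℕ → Set (ℝ × (Fin n → ℝ))) : Prop :=
  (∀ i ≤ k, IsSCPCone (C i)) ∧
  (∀ i ≤ k, C i ⊆ {w | 0 ≤ w.1}) ∧
  (∀ i ≤ k, spanDim (C i) = i + 1) ∧
  (∀ i, i + 1 ≤ k → C i ⊆ C (i + 1))

/-- A simplicial flag of cones: a flag of cones in which `C i` is generated by
`v 0, …, v i` for a linearly independent family `v`. -/
def IsSimplicialFlagOfCones (n k : ℕ) (C : ℕ → Set (ℝ × (Fin n → ℝ))) : Prop :=
  IsFlagOfCones n k C ∧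
  ∃ v : Fin (k + 1) → ℝ × (Fin n → ℝ), LinearIndependent ℝ v ∧ ∀ i ≤ k, C i = coneGenUpTo v i

/-- A `Γ`-admissible cone in `ℝ≥0 × ℝⁿ`. -/
def IsGammaAdmissibleCone {n : ℕ} (Γ : AddSubgroup ℝ) (D : Set (ℝ × (Fin n → ℝ))) : Prop :=
  ∃ q : ℕ, ∃ γ : Fin q → ℝ, ∃ u : Fin q → (Fin n → ℤ), (∀ l, γ l ∈ Γ) ∧
    D = {w | 0 ≤ w.1 ∧ ∀ l, w.1 * γ l + pairZ w.2 (u l) ≤ 0}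

/-- A `Γ`-rational polyhedron in `ℝⁿ`. -/
def IsGammaRatPolyhedron {n : ℕ} (Γ : AddSubgroup ℝ) (Q : Set (Fin n → ℝ)) : Prop :=
  ∃ q : ℕ, ∃ u : Fin q → (Fin n → ℤ), ∃ γ : Fin q → ℝ, (∀ l, γ l ∈ Γ) ∧
    Q = {x | ∀ l, pairZ x (u l) ≤ γ l}

/-- A polyhedron in `ℝⁿ`: a finite intersection of closed affine half-spaces. -/
def IsPolyhedron {n : ℕ} (P : Set (Fin n → ℝ)) : Prop :=
  ∃ q : ℕ, ∃ a : Fin q → (Fin n → ℝ), ∃ b : Fin q → ℝ,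
    P = {x | ∀ l, ∑ i, a l i * x i ≤ b l}

/-- A set containing no affine line. -/
def HasNoLine {n : ℕ} (P : Set (Fin n → ℝ)) : Prop :=
  ¬ ∃ x d : Fin n → ℝ, d ≠ 0 ∧ ∀ t : ℝ, x + t • d ∈ P

/-- The dimension of a polyhedron: the dimension of its affine span. -/
def polyDim {n : ℕ} (P : Set (Fin n → ℝ)) : ℕ :=
  Module.finrank ℝ (affineSpan ℝ P).direction

/-- A flag of polyhedra `P 0 ⊆ ⋯ ⊆ P k` in `ℝⁿ`: nonempty polyhedra containing no affine
line, with `dim (P i) = i`. -/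
def IsFlagOfPolyhedra (n k : ℕ) (P : ℕ → Set (Fin n → ℝ)) : Prop :=
  (∀ i ≤ k, (P i).Nonempty ∧ IsPolyhedron (P i) ∧ HasNoLine (P i) ∧ polyDim (P i) = i) ∧
  (∀ i, i + 1 ≤ k → P i ⊆ P (i + 1))

/-- The closed cone over a subset of `ℝⁿ`. -/
def closedConeOver {n : ℕ} (P : Set (Fin n → ℝ)) : Set (ℝ × (Fin n → ℝ)) :=
  closure {w : ℝ × (Fin n → ℝ) | ∃ l : ℝ, ∃ x ∈ P, 0 < l ∧ w = (l, l • x)}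

/-- A `Γ`-rational polyhedral set: a finite union of `Γ`-rational polyhedra. -/
def IsGammaRatPolyhedralSet {n : ℕ} (Γ : AddSubgroup ℝ) (U : Set (Fin n → ℝ)) : Prop :=
  ∃ m : ℕ, ∃ Q : Fin m → Set (Fin n → ℝ), (∀ j, IsGammaRatPolyhedron Γ (Q j)) ∧ U = ⋃ j, Q j

/-- A `Γ`-rational polytope: a bounded `Γ`-rational polyhedron. -/
def IsGammaRatPolytope {n : ℕ} (Γ : AddSubgroup ℝ) (Q : Set (Fin n → ℝ)) : Prop :=
  IsGammaRatPolyhedron Γ Q ∧ Bornology.IsBounded Q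

/-- A `Γ`-rational polytopal set: a finite union of `Γ`-rational polytopes. -/
def IsGammaRatPolytopalSet {n : ℕ} (Γ : AddSubgroup ℝ) (U : Set (Fin n → ℝ)) : Prop :=
  ∃ m : ℕ, ∃ Q : Fin m → Set (Fin n → ℝ), (∀ j, IsGammaRatPolytope Γ (Q j)) ∧ U = ⋃ j, Q j

/-- A prime filter on a lattice `L` of sets (ordered by inclusion, with meet = intersection
and join = union). -/
def IsPrimeFilterOn {α : Type*} (L : Set (Set α)) (F : Set (Set α)) : Prop :=
  F ⊆ L ∧ F.Nonempty ∧ F ≠ L ∧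
  (∀ U ∈ F, ∀ V ∈ L, U ⊆ V → V ∈ F) ∧
  (∀ U ∈ F, ∀ V ∈ F, U ∩ V ∈ F) ∧
  (∀ U ∈ L, ∀ V ∈ L, U ∪ V ∈ F → U ∈ F ∨ V ∈ F)

/-- `D` is a `Γ`-admissible neighborhood of the flag of cones `C 0 ⊆ ⋯ ⊆ C k`. -/
def IsGammaAdmNbhd {n : ℕ} (Γ : AddSubgroup ℝ) (k : ℕ) (C : ℕ → Set (ℝ × (Fin n → ℝ)))
    (D : Set (ℝ × (Fin n → ℝ))) : Prop :=
  IsGammaAdmissibleCone Γ D ∧ ∀ i ≤ k, (D ∩ intrinsicInterior ℝ (C i)).Nonempty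

/-- `Q` is a `Γ`-rational neighborhood of the flag of polyhedra `P 0 ⊆ ⋯ ⊆ P k`. -/
def IsGammaRatNbhd {n : ℕ} (Γ : AddSubgroup ℝ) (k : ℕ) (P : ℕ → Set (Fin n → ℝ))
    (Q : Set (Fin n → ℝ)) : Prop :=
  IsGammaRatPolyhedron Γ Q ∧ ∀ i ≤ k, (Q ∩ intrinsicInterior ℝ (P i)).Nonempty

/-- The lexicographic comparison of pairings against points `w 0, …, w k`. -/
def lexRel (n k : ℕ) (w : ℕ → ℝ × (Fin n → ℝ)) (a b : ℝ × (Fin n → ℝ)) : Prop :=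
  toLex (fun i : Fin (k + 1) => pairE (w i) a) ≤ toLex (fun i : Fin (k + 1) => pairE (w i) b)

/-- The embedding of `Γ × ℤⁿ` into `ℝ × ℝⁿ`. -/
def embGZ {n : ℕ} (Γ : AddSubgroup ℝ) (a : Γ × (Fin n → ℤ)) : ℝ × (Fin n → ℝ) :=
  ((a.1 : ℝ), fun i => (a.2 i : ℝ))

/-- The preorder on `Γ × ℤⁿ` associated to a (simplicial flag of cones with) chosen points
`w 0, …, w k`. -/
def flagRel (n k : ℕ) (Γ : AddSubgroup ℝ) (w : ℕ → ℝ × (Fin n → ℝ))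
    (a b : Γ × (Fin n → ℤ)) : Prop :=
  lexRel n k w (embGZ Γ a) (embGZ Γ b)

/-- `w` is a choice of points for the flag `C`: `w i ∈ C i \ C (i-1)` for `i ≤ k`. -/
def IsChoiceOfPoints (n k : ℕ) (C : ℕ → Set (ℝ × (Fin n → ℝ)))
    (w : ℕ → ℝ × (Fin n → ℝ)) : Prop :=
  ∀ i ≤ k, w i ∈ C i \ flagPrev C i

/-- A valuated monomial preorder on `Γ × ℤⁿ`. -/
def IsValuatedMonomialPreorder {n : ℕ} (Γ : AddSubgroup ℝ)
    (r : (Γ × (Fin n → ℤ)) → (Γ × (Fin n → ℤ)) → Prop) : Prop :=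
  (∀ a, r a a) ∧ (∀ a b c, r a b → r b c → r a c) ∧ (∀ a b, r a b ∨ r b a) ∧
  (∀ a b c, r a b → r (a + c) (b + c)) ∧
  (∀ α β : Γ, (α : ℝ) ≤ (β : ℝ) → r (α, 0) (β, 0))

/-- A Chan–Maclagan preorder on `Γ × ℤⁿ`. -/
def IsChanMaclaganPreorder {n : ℕ} (Γ : AddSubgroup ℝ)
    (r : (Γ × (Fin n → ℤ)) → (Γ × (Fin n → ℤ)) → Prop) : Prop :=
  IsValuatedMonomialPreorder Γ r ∧ ∀ a, ∃ β : Γ, r (β, 0) a ∧ ¬ r a (β, 0)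

/-!
If `⪯` is antisymmetric, extend the linearly independent generators `v₀, …, v_k` of `c(P_k)` by
vectors of height zero to a basis `b` of `ℝ × ℝⁿ`. The slices at height one of the cones generated
by `b₀, …, b_i` form a complete flag whose cones agree with `c(P_i)` for `i ≤ k`, and with the extra
points `w'_i = b_i` the lexicographic comparison only changes where the first `k + 1` pairings tie,
which by antisymmetry happens only on the diagonal. Conversely, for a complete simplicial flag the
coordinates of `w'_0, …, w'_n` in the generating basis form an upper triangular matrix with nonzero
diagonal, so these points span `ℝ × ℝⁿ` and equal pairings with all of them force `𝔲 = 𝔳`.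
-/

section Lex

variable {α : Type*} [LinearOrder α] {m N : ℕ}

theorem Pi.toLex_lt_of_comp_castLE_lt (h : m ≤ N) {f g : Fin N → α}
    (hlt : toLex (f ∘ Fin.castLE h) < toLex (g ∘ Fin.castLE h)) : toLex f < toLex g := by
  obtain ⟨i, hagree, hi⟩ := hlt
  exact ⟨Fin.castLE h i, fun j hj => hagree ⟨j, (show (j : ℕ) < i from hj).trans i.isLt⟩ hj, hi⟩

theorem Pi.toLex_le_iff_comp_castLE_le (h : m ≤ N) {f g : Fin N → α}
    (hne : f ∘ Fin.castLE h ≠ g ∘ Fin.castLE h) :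
    toLex f ≤ toLex g ↔ toLex (f ∘ Fin.castLE h) ≤ toLex (g ∘ Fin.castLE h) := by
  rcases lt_trichotomy (toLex (f ∘ Fin.castLE h)) (toLex (g ∘ Fin.castLE h)) with hlt | heq | hgt
  · exact iff_of_true (toLex_lt_of_comp_castLE_lt h hlt).le hlt.le
  · exact absurd (toLex.injective heq) hne
  · exact iff_of_false (toLex_lt_of_comp_castLE_lt h hgt).not_ge hgt.not_ge

end Lex

section Pairing

variable {n : ℕ}

def pairELeft (u : ℝ × (Fin n → ℝ)) : (ℝ × (Fin n → ℝ)) →ₗ[ℝ] ℝ where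
  toFun w := pairE w u
  map_add' w w' := by
    simp only [pairE, Prod.fst_add, Prod.snd_add, Pi.add_apply, add_mul, Finset.sum_add_distrib]
    ring
  map_smul' c w := by
    simp only [pairE, Prod.smul_fst, Prod.smul_snd, Pi.smul_apply, smul_eq_mul, mul_assoc,
      ← Finset.mul_sum, RingHom.id_apply]
    ring

theorem pairELeft_injective : Function.Injective (pairELeft (n := n)) := by
  intro u u' h
  have h' := LinearMap.congr_fun h
  ext i
  · simpa [pairELeft, pairE] using h' ((1 : ℝ), 0)
  · simpa [pairELeft, pairE, Pi.single_apply] using h' ((0 : ℝ), Pi.single i 1)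

theorem embGZ_injective (Γ : AddSubgroup ℝ) : Function.Injective (embGZ (n := n) Γ) := by
  rintro ⟨γ, u⟩ ⟨γ', u'⟩ h
  simp only [embGZ, Prod.mk.injEq] at h
  exact Prod.ext (Subtype.ext h.1) (funext fun i => by exact_mod_cast congrFun h.2 i)

end Pairing

section ConeGen

variable {V : Type*} [AddCommGroup V] [Module ℝ V] {r : ℕ}

theorem subset_coneGen (v : Fin r → V) : Set.range v ⊆ coneGen v := by
  rintro _ ⟨j, rfl⟩
  refine ⟨Pi.single j 1, fun l => ?_, ?_⟩
  · by_cases h : l = j <;> simp [h]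
  · simp [Pi.single_apply]

theorem span_coneGen (v : Fin r → V) :
    Submodule.span ℝ (coneGen v) = Submodule.span ℝ (Set.range v) := by
  refine le_antisymm (Submodule.span_le.2 ?_) (Submodule.span_mono (subset_coneGen v))
  rintro _ ⟨lam, -, rfl⟩
  exact Submodule.sum_mem _ fun j _ => Submodule.smul_mem _ _ (Submodule.subset_span ⟨j, rfl⟩)

theorem eq_zero_of_mem_coneGen_of_neg_mem {v : Fin r → V} (hv : LinearIndependent ℝ v) {x : V}
    (hx : x ∈ coneGen v) (hnx : -x ∈ coneGen v) : x = 0 := by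
  obtain ⟨lam, hlam, rfl⟩ := hx
  obtain ⟨mu, hmu, hsum⟩ := hnx
  have hzero : ∑ j, (lam j + mu j) • v j = 0 := by
    simp only [add_smul, Finset.sum_add_distrib, ← hsum, add_neg_cancel]
  have hlam0 : ∀ j, lam j = 0 := fun j => by
    linarith [hlam j, hmu j, Fintype.linearIndependent_iff.1 hv _ hzero j]
  simp [hlam0]

theorem coneGenUpTo_eq_coneGen (v : Fin r → V) {i : ℕ} (hi : i < r) :
    coneGenUpTo v i = coneGen (v ∘ Fin.castLE hi) := by
  have hrange : ∀ j : Fin r, j ∉ Set.range (Fin.castLE hi) ↔ i < j := fun j => by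
    simp only [Set.mem_range, not_exists]
    constructor
    · intro h
      by_contra hj
      exact h ⟨j, by omega⟩ rfl
    · rintro hj l rfl
      exact absurd hj (not_lt.2 l.is_le)
  ext x
  constructor
  · rintro ⟨lam, hlam, hz, rfl⟩
    refine ⟨lam ∘ Fin.castLE hi, fun j => hlam _, Eq.symm ?_⟩
    exact Fintype.sum_of_injective _ (Fin.castLE_injective hi) _ _
      (fun j hj => by simp [hz j ((hrange j).1 hj)]) fun _ => rfl
  · rintro ⟨mu, hmu, rfl⟩
    set lam := Function.extend (Fin.castLE hi) mu 0
    have hlam : ∀ j, lam (Fin.castLE hi j) = mu j := (Fin.castLE_injective hi).extend_apply mu 0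
    have hlam' : ∀ j : Fin r, i < (j : ℕ) → lam j = 0 := fun j hj =>
      Function.extend_apply' _ _ _ ((hrange j).2 hj)
    refine ⟨lam, fun j => ?_, hlam', ?_⟩
    · by_cases hj : i < (j : ℕ)
      · rw [hlam' j hj]
      · obtain ⟨l, rfl⟩ : j ∈ Set.range (Fin.castLE hi) := by_contra fun h => hj ((hrange j).1 h)
        rw [hlam]
        exact hmu l
    · exact Fintype.sum_of_injective _ (Fin.castLE_injective hi) _ _
        (fun j hj => by simp [hlam' j ((hrange j).1 hj)]) fun j => by simp [hlam]

theorem coneGenUpTo_mono (v : Fin r → V) {i i' : ℕ} (h : i ≤ i') :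
    coneGenUpTo v i ⊆ coneGenUpTo v i' :=
  fun _ ⟨lam, hlam, hz, hx⟩ => ⟨lam, hlam, fun j hj => hz j (h.trans_lt hj), hx⟩

theorem self_mem_coneGenUpTo (v : Fin r → V) {i : ℕ} {j : Fin r} (hj : (j : ℕ) ≤ i) :
    v j ∈ coneGenUpTo v i := by
  refine coneGenUpTo_mono v hj ?_
  rw [coneGenUpTo_eq_coneGen v j.isLt]
  exact subset_coneGen _ ⟨⟨j, Nat.lt_succ_self _⟩, rfl⟩

theorem nonneg_of_mem_coneGenUpTo {v : Fin r → V} (f : V →ₗ[ℝ] ℝ) (hf : ∀ j, 0 ≤ f (v j))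
    {i : ℕ} {x : V} (hx : x ∈ coneGenUpTo v i) : 0 ≤ f x := by
  obtain ⟨lam, hlam, -, rfl⟩ := hx
  simp only [map_sum, map_smul, smul_eq_mul]
  exact Finset.sum_nonneg fun j _ => mul_nonneg (hlam j) (hf j)

theorem coneGenUpTo_comp_castLE {m : ℕ} (v : Fin r → V) (h : m ≤ r) {i : ℕ} (hi : i < m) :
    coneGenUpTo (v ∘ Fin.castLE h) i = coneGenUpTo v i := by
  rw [coneGenUpTo_eq_coneGen _ hi, coneGenUpTo_eq_coneGen _ (hi.trans_le h)]
  rfl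

theorem spanDim_coneGenUpTo {v : Fin r → V} (hv : LinearIndependent ℝ v) {i : ℕ} (hi : i < r) :
    spanDim (coneGenUpTo v i) = i + 1 := by
  rw [spanDim, coneGenUpTo_eq_coneGen v hi, span_coneGen,
    finrank_span_eq_card (hv.comp _ (Fin.castLE_injective hi)), Fintype.card_fin]

theorem isSCPCone_coneGenUpTo {v : Fin r → V} (hv : LinearIndependent ℝ v) {i : ℕ} (hi : i < r) :
    IsSCPCone (coneGenUpTo v i) := by
  rw [coneGenUpTo_eq_coneGen v hi]
  exact ⟨⟨i + 1, _, rfl⟩, fun _ =>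
    eq_zero_of_mem_coneGen_of_neg_mem (hv.comp _ (Fin.castLE_injective hi))⟩

def convexConeGenUpTo (v : Fin r → V) (i : ℕ) : ConvexCone ℝ V where
  carrier := coneGenUpTo v i
  smul_mem' c hc := by
    rintro _ ⟨lam, hlam, hz, rfl⟩
    exact ⟨c • lam, fun j => smul_nonneg hc.le (hlam j), fun j hj => by simp [hz j hj],
      by simp [Finset.smul_sum, smul_smul]⟩
  add_mem' := by
    rintro _ ⟨lam, hlam, hz, rfl⟩ _ ⟨mu, hmu, hz', rfl⟩
    exact ⟨lam + mu, fun j => add_nonneg (hlam j) (hmu j), fun j hj => by simp [hz j hj, hz' j hj],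
      by simp [add_smul, Finset.sum_add_distrib]⟩

end ConeGen

theorem IsSimplicialFlagOfCones.le {n k : ℕ} {C : ℕ → Set (ℝ × (Fin n → ℝ))}
    (h : IsSimplicialFlagOfCones n k C) : k ≤ n := by
  obtain ⟨-, v, hv, -⟩ := h
  have := hv.fintype_card_le_finrank
  simp only [Fintype.card_fin, Module.finrank_prod, Module.finrank_self, Module.finrank_fin_fun]
    at this
  omega

theorem isSimplicialFlagOfCones_coneGenUpTo {n k : ℕ} {v : Fin (k + 1) → ℝ × (Fin n → ℝ)}
    (hv : LinearIndependent ℝ v) (hv_fst : ∀ j, 0 ≤ (v j).1) :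
    IsSimplicialFlagOfCones n k fun i => coneGenUpTo v i :=
  ⟨⟨fun _ hi => isSCPCone_coneGenUpTo hv (Nat.lt_succ_of_le hi),
    fun _ _ _ hx => nonneg_of_mem_coneGenUpTo (LinearMap.fst ℝ ℝ _) hv_fst hx,
    fun _ hi => spanDim_coneGenUpTo hv (Nat.lt_succ_of_le hi),
    fun i _ => coneGenUpTo_mono v i.le_succ⟩, v, hv, fun _ _ => rfl⟩

theorem flagPrev_congr {V : Type*} [Zero V] {C C' : ℕ → Set V} {i : ℕ}
    (h : ∀ j < i, C j = C' j) : flagPrev C i = flagPrev C' i := by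
  cases i with
  | zero => rfl
  | succ i => exact h i i.lt_succ_self

theorem IsChoiceOfPoints.congr {n k : ℕ} {C C' : ℕ → Set (ℝ × (Fin n → ℝ))}
    {w : ℕ → ℝ × (Fin n → ℝ)} (hw : IsChoiceOfPoints n k C w) (h : ∀ i ≤ k, C i = C' i) :
    IsChoiceOfPoints n k C' w := fun i hi => by
  rw [← h i hi, ← flagPrev_congr fun j hj => h j (by omega)]
  exact hw i hi

theorem IsChoiceOfPoints.piecewise {n k N : ℕ} {C : ℕ → Set (ℝ × (Fin n → ℝ))}
    {w u : ℕ → ℝ × (Fin n → ℝ)} (hw : IsChoiceOfPoints n k C w) (hu : IsChoiceOfPoints n N C u) :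
    IsChoiceOfPoints n N C fun i => if i ≤ k then w i else u i := fun i hi => by
  dsimp only
  split_ifs with hik
  · exact hw i hik
  · exact hu i hi

section Basis

variable {V : Type*} [AddCommGroup V] [Module ℝ V] {r : ℕ} (b : Module.Basis (Fin r) ℝ V)

theorem Module.Basis.mem_coneGenUpTo_iff {i : ℕ} {x : V} :
    x ∈ coneGenUpTo b i ↔ ∀ j, 0 ≤ b.repr x j ∧ (i < (j : ℕ) → b.repr x j = 0) := by
  constructor
  · rintro ⟨lam, hlam, hz, rfl⟩
    rw [b.repr_sum_self]
    exact fun j => ⟨hlam j, hz j⟩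
  · exact fun h => ⟨fun j => b.repr x j, fun j => (h j).1, fun j hj => (h j).2 hj,
      (b.sum_repr x).symm⟩

theorem Module.Basis.mem_flagPrev_coneGenUpTo_iff {i : ℕ} (hi : i < r) {x : V}
    (hx : x ∈ coneGenUpTo b i) :
    x ∈ flagPrev (fun i => coneGenUpTo b i) i ↔ b.repr x ⟨i, hi⟩ = 0 := by
  rw [b.mem_coneGenUpTo_iff] at hx
  cases i with
  | zero =>
    refine ⟨by rintro rfl; simp, fun h0 => b.forall_coord_eq_zero_iff.1 fun j => ?_⟩
    rw [b.coord_apply]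
    rcases Nat.eq_zero_or_pos j with hj | hj
    · rwa [show j = ⟨0, hi⟩ from Fin.ext hj]
    · exact (hx j).2 hj
  | succ i =>
    change x ∈ coneGenUpTo b i ↔ _
    rw [b.mem_coneGenUpTo_iff]
    refine ⟨fun h => (h _).2 i.lt_succ_self, fun h0 j => ⟨(hx j).1, fun hj => ?_⟩⟩
    rcases (Nat.succ_le_of_lt hj).eq_or_lt with hj' | hj'
    · rwa [show j = ⟨i + 1, hi⟩ from Fin.ext hj'.symm]
    · exact (hx j).2 hj'

theorem Module.Basis.span_eq_top_of_mem_coneGenUpTo {u : Fin r → V}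
    (hu : ∀ i : Fin r, u i ∈ coneGenUpTo b i \ flagPrev (fun i => coneGenUpTo b i) i) :
    Submodule.span ℝ (Set.range u) = ⊤ := by
  refine (b.is_basis_iff_det.2 ?_).2
  rw [b.det_apply, Matrix.det_of_isUpperTriangular]
  · refine (Finset.prod_ne_zero_iff.2 fun i _ => ?_).isUnit
    rw [b.toMatrix_apply]
    exact (b.mem_flagPrev_coneGenUpTo_iff i.isLt (hu i).1).not.1 (hu i).2
  · intro i j hij
    rw [b.toMatrix_apply]
    exact ((b.mem_coneGenUpTo_iff.1 (hu j).1) i).2 hij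

theorem Module.Basis.isClosed_coneGenUpTo [TopologicalSpace V] [IsTopologicalAddGroup V]
    [ContinuousSMul ℝ V] [T2Space V] [FiniteDimensional ℝ V] (i : ℕ) :
    IsClosed (coneGenUpTo b i) := by
  have hc : ∀ j, Continuous fun x => b.repr x j := fun j =>
    (b.coord j).continuous_of_finiteDimensional
  rw [show coneGenUpTo b i = {x | ∀ j, 0 ≤ b.repr x j ∧ (i < (j : ℕ) → b.repr x j = 0)} from
    Set.ext fun _ => b.mem_coneGenUpTo_iff]
  simp only [Set.ofPred_forall, Set.ofPred_and]
  exact isClosed_iInter fun j => (isClosed_le continuous_const (hc j)).inter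
    (isClosed_iInter fun _ => isClosed_eq (hc j) continuous_const)

end Basis

section Slice

variable {n : ℕ}

def sliceAtOne (C : Set (ℝ × (Fin n → ℝ))) : Set (Fin n → ℝ) := {x | ((1 : ℝ), x) ∈ C}

theorem closedConeOver_subset_fst_nonneg (P : Set (Fin n → ℝ)) :
    closedConeOver P ⊆ {w | 0 ≤ w.1} :=
  closure_minimal (by rintro _ ⟨l, x, -, hl, rfl⟩; exact hl.le)
    (isClosed_le continuous_const continuous_fst)

theorem sliceAtOne_nonempty (C : ConvexCone ℝ (ℝ × (Fin n → ℝ))) {q : ℝ × (Fin n → ℝ)}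
    (hq : q ∈ C) (hq1 : 0 < q.1) : (sliceAtOne (C : Set (ℝ × (Fin n → ℝ)))).Nonempty := by
  refine ⟨q.1⁻¹ • q.2, ?_⟩
  change ((1 : ℝ), q.1⁻¹ • q.2) ∈ C
  rw [show ((1 : ℝ), q.1⁻¹ • q.2) = q.1⁻¹ • q by ext <;> simp [hq1.ne']]
  exact C.smul_mem (inv_pos.2 hq1) hq

theorem closedConeOver_sliceAtOne (C : ConvexCone ℝ (ℝ × (Fin n → ℝ)))
    (hC : IsClosed (C : Set (ℝ × (Fin n → ℝ)))) (hfst : ∀ z ∈ C, 0 ≤ z.1)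
    {q : ℝ × (Fin n → ℝ)} (hq : q ∈ C) (hq1 : 0 < q.1) :
    closedConeOver (sliceAtOne (C : Set (ℝ × (Fin n → ℝ)))) = C := by
  refine subset_antisymm (closure_minimal ?_ hC) fun z hz => ?_
  · rintro _ ⟨l, x, hx, hl, rfl⟩
    rw [show ((l, l • x) : ℝ × (Fin n → ℝ)) = l • ((1 : ℝ), x) by ext <;> simp]
    exact C.smul_mem hl hx
  -- `z` is the limit of `z + ε • q`, which has positive height and so lies over the slice.
  have hlim : Filter.Tendsto (fun ε : ℝ => z + ε • q) (nhdsWithin 0 (Set.Ioi 0)) (nhds z) := by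
    have hcont : Continuous fun ε : ℝ => z + ε • q :=
      continuous_const.add (continuous_id.smul continuous_const)
    simpa using (hcont.tendsto 0).mono_left nhdsWithin_le_nhds
  refine mem_closure_of_tendsto hlim (eventually_nhdsWithin_of_forall fun ε (hε : 0 < ε) => ?_)
  set y := z + ε • q
  have hy : y ∈ C := C.add_mem hz (C.smul_mem hε hq)
  have hy1 : 0 < y.1 := add_pos_of_nonneg_of_pos (hfst z hz) (mul_pos hε hq1)
  refine ⟨y.1, y.1⁻¹ • y.2, ?_, hy1, ?_⟩
  · change ((1 : ℝ), y.1⁻¹ • y.2) ∈ C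
    rw [show ((1 : ℝ), y.1⁻¹ • y.2) = y.1⁻¹ • y by ext <;> simp [hy1.ne']]
    exact C.smul_mem (inv_pos.2 hy1) hy
  · ext <;> simp [hy1.ne']

theorem isPolyhedron_setOf_forall_le {ι : Type*} [Finite ι] (f : ι → (Fin n → ℝ) →ₗ[ℝ] ℝ)
    (c : ι → ℝ) : IsPolyhedron {x | ∀ l, f l x ≤ c l} := by
  classical
  obtain ⟨q, ⟨e⟩⟩ := Finite.exists_equiv_fin ι
  refine ⟨q, fun l t => f (e.symm l) fun j => if t = j then 1 else 0, fun l => c (e.symm l), ?_⟩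
  have hf : ∀ l x, f l x = ∑ t, f l (fun j => if t = j then 1 else 0) * x t := fun l x => by
    rw [LinearMap.pi_apply_eq_sum_univ]
    exact Finset.sum_congr rfl fun t _ => mul_comm _ _
  ext x
  simp only [Set.mem_ofPred_eq, ← hf]
  exact ⟨fun h l => h _, fun h l => by simpa using h (e l)⟩

theorem isPolyhedron_sliceAtOne {ι : Type*} [Finite ι] (φ : ι → (ℝ × (Fin n → ℝ)) →ₗ[ℝ] ℝ) :
    IsPolyhedron (sliceAtOne {z | ∀ l, 0 ≤ φ l z}) := by
  convert isPolyhedron_setOf_forall_le (fun l => -(φ l ∘ₗ LinearMap.inr ℝ ℝ _))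
    (fun l => φ l ((1 : ℝ), 0)) using 1
  ext x
  have key : ∀ l, φ l ((1 : ℝ), x) = φ l ((1 : ℝ), 0) + φ l ((0 : ℝ), x) := fun l => by
    rw [← map_add, Prod.mk_add_mk, add_zero, zero_add]
  simp [sliceAtOne, key, neg_le_iff_add_nonneg]

theorem hasNoLine_of_forall_repr_nonneg {ι : Type*} (b : Module.Basis ι ℝ (ℝ × (Fin n → ℝ)))
    {S : Set (Fin n → ℝ)} (hS : ∀ x ∈ S, ∀ j, 0 ≤ b.repr ((1 : ℝ), x) j) : HasNoLine S := by
  rintro ⟨x, d, hd, hline⟩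
  have hrepr : ∀ (t : ℝ) j,
      b.repr ((1 : ℝ), x + t • d) j = b.repr ((1 : ℝ), x) j + t * b.repr ((0 : ℝ), d) j := by
    intro t j
    rw [show ((1 : ℝ), x + t • d) = ((1 : ℝ), x) + t • ((0 : ℝ), d) by ext <;> simp]
    simp only [map_add, map_smul, Finsupp.add_apply, Finsupp.smul_apply, smul_eq_mul]
  -- a coordinate that is affine in `t` and nonnegative for all `t` has zero slope
  have hzero : ∀ j, b.repr ((0 : ℝ), d) j = 0 := fun j => by
    by_contra hj
    have := hS _ (hline (-(b.repr ((1 : ℝ), x) j + 1) / b.repr ((0 : ℝ), d) j)) j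
    rw [hrepr, div_mul_cancel₀ _ hj] at this
    linarith
  exact hd (congrArg Prod.snd (b.forall_coord_eq_zero_iff.1 fun j => by
    rw [b.coord_apply]; exact hzero j))

theorem span_closedConeOver (S : Set (Fin n → ℝ)) :
    Submodule.span ℝ (closedConeOver S) = Submodule.span ℝ ((fun x => ((1 : ℝ), x)) '' S) := by
  have hcone : Submodule.span ℝ {w : ℝ × (Fin n → ℝ) | ∃ l : ℝ, ∃ x ∈ S, 0 < l ∧ w = (l, l • x)} =
      Submodule.span ℝ ((fun x => ((1 : ℝ), x)) '' S) := by
    refine le_antisymm (Submodule.span_le.2 ?_) (Submodule.span_mono ?_)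
    · rintro _ ⟨l, x, hx, -, rfl⟩
      rw [show ((l, l • x) : ℝ × (Fin n → ℝ)) = l • ((1 : ℝ), x) by ext <;> simp]
      exact Submodule.smul_mem _ _ (Submodule.subset_span ⟨x, hx, rfl⟩)
    · rintro _ ⟨x, hx, rfl⟩
      exact ⟨1, x, hx, one_pos, by simp⟩
  rw [closedConeOver, ← hcone]
  exact le_antisymm (Submodule.span_le.2 (closure_minimal Submodule.subset_span
    (Submodule.closed_of_finiteDimensional _))) (Submodule.span_mono subset_closure)

theorem span_image_mk_one_eq_sup {S : Set (Fin n → ℝ)} {x₀ : Fin n → ℝ} (hx₀ : x₀ ∈ S) :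
    Submodule.span ℝ ((fun x => ((1 : ℝ), x)) '' S) =
      (vectorSpan ℝ S).map (LinearMap.inr ℝ ℝ (Fin n → ℝ)) ⊔ ℝ ∙ ((1 : ℝ), x₀) := by
  refine le_antisymm (Submodule.span_le.2 ?_) (sup_le ?_ ?_)
  · rintro _ ⟨x, hx, rfl⟩
    refine Submodule.mem_sup.2 ⟨_, Submodule.mem_map_of_mem (vsub_mem_vectorSpan ℝ hx hx₀), _,
      Submodule.mem_span_singleton_self _, ?_⟩
    ext <;> simp
  · rw [vectorSpan_def, Submodule.map_span, Submodule.span_le]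
    rintro _ ⟨_, ⟨x, hx, y, hy, rfl⟩, rfl⟩
    rw [show LinearMap.inr ℝ ℝ (Fin n → ℝ) (x -ᵥ y) = ((1 : ℝ), x) - ((1 : ℝ), y) by
      ext <;> simp]
    exact Submodule.sub_mem _ (Submodule.subset_span ⟨x, hx, rfl⟩)
      (Submodule.subset_span ⟨y, hy, rfl⟩)
  · exact (Submodule.span_singleton_le_iff_mem _ _).2 (Submodule.subset_span ⟨x₀, hx₀, rfl⟩)

theorem polyDim_add_one_eq_spanDim_closedConeOver {S : Set (Fin n → ℝ)} (hS : S.Nonempty) :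
    polyDim S + 1 = spanDim (closedConeOver S) := by
  obtain ⟨x₀, hx₀⟩ := hS
  have hnot : ((1 : ℝ), x₀) ∉ (vectorSpan ℝ S).map (LinearMap.inr ℝ ℝ (Fin n → ℝ)) := by
    rintro ⟨d, -, hd⟩
    simpa using congrArg Prod.fst hd
  rw [spanDim, span_closedConeOver, span_image_mk_one_eq_sup hx₀,
    Submodule.finrank_sup_span_singleton hnot, polyDim, direction_affineSpan,
    ← (Submodule.equivMapOfInjective _ (LinearMap.inr_injective (R := ℝ) (M := ℝ)
      (M₂ := Fin n → ℝ)) (vectorSpan ℝ S)).finrank_eq]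

end Slice

section BasisFlag

variable {n : ℕ} (b : Module.Basis (Fin (n + 1)) ℝ (ℝ × (Fin n → ℝ)))

theorem closedConeOver_sliceAtOne_coneGenUpTo (hb : ∀ j, 0 ≤ (b j).1) (hb0 : 0 < (b 0).1)
    (i : ℕ) : closedConeOver (sliceAtOne (coneGenUpTo b i)) = coneGenUpTo b i :=
  closedConeOver_sliceAtOne (convexConeGenUpTo b i) (b.isClosed_coneGenUpTo i)
    (fun _ hz => nonneg_of_mem_coneGenUpTo (LinearMap.fst ℝ ℝ _) hb hz)
    (self_mem_coneGenUpTo b (Nat.zero_le i)) hb0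

theorem isFlagOfPolyhedra_sliceAtOne_coneGenUpTo (hb : ∀ j, 0 ≤ (b j).1) (hb0 : 0 < (b 0).1) :
    IsFlagOfPolyhedra n n fun i => sliceAtOne (coneGenUpTo b i) := by
  have hne : ∀ i, (sliceAtOne (coneGenUpTo b i)).Nonempty := fun i =>
    sliceAtOne_nonempty (convexConeGenUpTo b i) (self_mem_coneGenUpTo b (Nat.zero_le i)) hb0
  refine ⟨fun i hi => ⟨hne i, ?_, ?_, ?_⟩, fun i _ _ hx => coneGenUpTo_mono b i.le_succ hx⟩
  · convert isPolyhedron_sliceAtOne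
      (Sum.elim (fun j => b.coord j) fun j : {j : Fin (n + 1) // i < (j : ℕ)} => -b.coord j)
    ext z
    simp only [b.mem_coneGenUpTo_iff, Set.mem_ofPred_eq, Sum.forall, Sum.elim_inl, Sum.elim_inr,
      Subtype.forall, LinearMap.neg_apply, b.coord_apply, neg_nonneg, forall_and]
    exact and_congr_right fun hnn => forall₂_congr fun j _ => (hnn j).ge_iff_eq'.symm
  · exact hasNoLine_of_forall_repr_nonneg b fun x hx j => (b.mem_coneGenUpTo_iff.1 hx j).1
  · change polyDim (sliceAtOne (coneGenUpTo b i)) = i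
    have := polyDim_add_one_eq_spanDim_closedConeOver (hne i)
    rw [closedConeOver_sliceAtOne_coneGenUpTo b hb hb0,
      spanDim_coneGenUpTo b.linearIndependent (Nat.lt_succ_of_le hi)] at this
    omega

theorem isChoiceOfPoints_basis :
    IsChoiceOfPoints n n (fun i => coneGenUpTo b i) fun i => b (Fin.ofNat (n + 1) i) := by
  intro i hi
  have hval : (Fin.ofNat (n + 1) i : ℕ) = i := Nat.mod_eq_of_lt (Nat.lt_succ_of_le hi)
  have hmem : b (Fin.ofNat (n + 1) i) ∈ coneGenUpTo b i := self_mem_coneGenUpTo b hval.le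
  refine ⟨hmem, fun h => ?_⟩
  have := (b.mem_flagPrev_coneGenUpTo_iff (Nat.lt_succ_of_le hi) hmem).1 h
  rw [show (⟨i, _⟩ : Fin (n + 1)) = Fin.ofNat (n + 1) i from Fin.ext hval.symm, b.repr_self,
    Finsupp.single_eq_same] at this
  exact one_ne_zero this

end BasisFlag

theorem exists_linearIndependent_extension_mem {K V : Type*} [Field K] [AddCommGroup V]
    [Module K V] [FiniteDimensional K V] {m : ℕ} {g : Fin m → V} (hg : LinearIndependent K g)
    {W : Submodule K V} (hW : Submodule.span K (Set.range g) ⊔ W = ⊤) {N : ℕ} (hmN : m ≤ N)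
    (hN : N ≤ Module.finrank K V) :
    ∃ b : Fin N → V, LinearIndependent K b ∧ b ∘ Fin.castLE hmN = g ∧
      ∀ j : Fin N, m ≤ (j : ℕ) → b j ∈ W := by
  induction N, hmN using Nat.le_induction with
  | base => exact ⟨g, hg, rfl, fun j hj => absurd j.isLt (not_lt.2 hj)⟩
  | succ N hmN ih =>
    obtain ⟨b, hb, hbg, hbW⟩ := ih (Nat.le_of_succ_le hN)
    obtain ⟨y, hyW, hy⟩ : ∃ y ∈ W, y ∉ Submodule.span K (Set.range b) := by
      by_contra! h
      have hg_le : Submodule.span K (Set.range g) ≤ Submodule.span K (Set.range b) := by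
        rw [← hbg, Set.range_comp]
        exact Submodule.span_mono (Set.image_subset_range _ _)
      have htop : Submodule.span K (Set.range b) = ⊤ := eq_top_iff.2 (hW ▸ sup_le hg_le h)
      have := finrank_span_eq_card hb
      rw [htop, finrank_top, Fintype.card_fin] at this
      omega
    refine ⟨Fin.snoc b y, linearIndependent_finSnoc.2 ⟨hb, hy⟩, funext fun j => ?_, fun j hj => ?_⟩
    · exact (Fin.snoc_castSucc (α := fun _ => V) y b (Fin.castLE hmN j)).trans (congrFun hbg j)
    · cases j using Fin.lastCases with
      | last => simpa using hyW
      | cast j => simpa using hbW j hj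

theorem exists_basis_extension_fst_eq_zero {n k : ℕ} (hkn : k ≤ n)
    {v : Fin (k + 1) → ℝ × (Fin n → ℝ)} (hv : LinearIndependent ℝ v) (hv0 : (v 0).1 ≠ 0) :
    ∃ b : Module.Basis (Fin (n + 1)) ℝ (ℝ × (Fin n → ℝ)),
      ⇑b ∘ Fin.castLE (Nat.succ_le_succ hkn) = v ∧ ∀ j : Fin (n + 1), k < (j : ℕ) → (b j).1 = 0 := by
  have hfin : Module.finrank ℝ (ℝ × (Fin n → ℝ)) = n + 1 := by simp [add_comm]
  have hW : Submodule.span ℝ (Set.range v) ⊔ LinearMap.ker (LinearMap.fst ℝ ℝ (Fin n → ℝ)) = ⊤ :=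
    eq_top_iff.2 ((LinearMap.span_singleton_sup_ker_eq_top _ hv0).ge.trans (sup_le_sup_right
      ((Submodule.span_singleton_le_iff_mem _ _).2 (Submodule.subset_span (Set.mem_range_self 0))) _))
  obtain ⟨g, hg, hgv, hgW⟩ :=
    exists_linearIndependent_extension_mem hv hW (Nat.succ_le_succ hkn) hfin.ge
  refine ⟨basisOfLinearIndependentOfCardEqFinrank hg (by simp [hfin]), ?_, fun j hj => ?_⟩
  · rwa [coe_basisOfLinearIndependentOfCardEqFinrank]
  · rw [coe_basisOfLinearIndependentOfCardEqFinrank]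
    exact hgW j hj

theorem exists_complete_flag_extending {n k : ℕ} {P : ℕ → Set (Fin n → ℝ)}
    (hsimp : IsSimplicialFlagOfCones n k fun i => closedConeOver (P i)) (hP0 : (P 0).Nonempty) :
    ∃ P' : ℕ → Set (Fin n → ℝ), IsFlagOfPolyhedra n n P' ∧
      IsSimplicialFlagOfCones n n (fun i => closedConeOver (P' i)) ∧
      (∀ i ≤ k, closedConeOver (P' i) = closedConeOver (P i)) ∧
      ∃ u, IsChoiceOfPoints n n (fun i => closedConeOver (P' i)) u := by
  have hkn := hsimp.le
  obtain ⟨-, v, hv, hvC⟩ := hsimp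
  have hv_fst : ∀ j, 0 ≤ (v j).1 := fun j => closedConeOver_subset_fst_nonneg (P j)
    (by rw [show closedConeOver (P j) = coneGenUpTo v j from hvC j j.is_le]
        exact self_mem_coneGenUpTo v le_rfl)
  have hv0 : 0 < (v 0).1 := by
    obtain ⟨x₀, hx₀⟩ := hP0
    have h1 : ((1 : ℝ), x₀) ∈ coneGenUpTo v 0 := by
      rw [show coneGenUpTo v 0 = closedConeOver (P 0) from (hvC 0 k.zero_le).symm]
      exact subset_closure ⟨1, x₀, hx₀, one_pos, by simp⟩
    obtain ⟨mu, hmu, hsum⟩ := (coneGenUpTo_eq_coneGen v k.succ_pos) ▸ h1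
    have h2 : mu 0 * (v 0).1 = 1 := by simpa using (congrArg Prod.fst hsum).symm
    exact pos_of_mul_pos_right (h2 ▸ one_pos) (hmu 0)
  obtain ⟨b, hbv, hb⟩ := exists_basis_extension_fst_eq_zero hkn hv hv0.ne'
  have hb_fst : ∀ j, 0 ≤ (b j).1 := fun j => by
    by_cases hj : (j : ℕ) ≤ k
    · rw [show b j = v ⟨j, Nat.lt_succ_of_le hj⟩ from congrFun hbv ⟨j, Nat.lt_succ_of_le hj⟩]
      exact hv_fst _
    · rw [hb j (not_le.1 hj)]
  have hb0 : 0 < (b 0).1 := by rw [show b 0 = v 0 from congrFun hbv 0]; exact hv0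
  have hcone := closedConeOver_sliceAtOne_coneGenUpTo b hb_fst hb0
  refine ⟨fun i => sliceAtOne (coneGenUpTo b i),
    isFlagOfPolyhedra_sliceAtOne_coneGenUpTo b hb_fst hb0, ?_, fun i hi => ?_, fun i => b (Fin.ofNat (n + 1) i), ?_⟩
  · simp only [hcone]
    exact isSimplicialFlagOfCones_coneGenUpTo b.linearIndependent hb_fst
  · rw [hcone, show closedConeOver (P i) = coneGenUpTo v i from hvC i hi, ← hbv, coneGenUpTo_comp_castLE _ _ (Nat.lt_succ_of_le hi)]
  · simp only [hcone]
    exact isChoiceOfPoints_basis b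

theorem flagRel_iff_of_antisymm {n k N : ℕ} (hkN : k ≤ N) (Γ : AddSubgroup ℝ)
    {w w' : ℕ → ℝ × (Fin n → ℝ)} (hww' : ∀ i ≤ k, w' i = w i)
    (hanti : ∀ a b : Γ × (Fin n → ℤ), flagRel n k Γ w a b → flagRel n k Γ w b a → a = b)
    (a b : Γ × (Fin n → ℤ)) : flagRel n k Γ w a b ↔ flagRel n N Γ w' a b := by
  have hprefix : ∀ c, (fun i : Fin (N + 1) => pairE (w' i) (embGZ Γ c)) ∘
      Fin.castLE (Nat.succ_le_succ hkN) = fun i : Fin (k + 1) => pairE (w i) (embGZ Γ c) :=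
    fun c => funext fun i => by simp [hww' i i.is_le]
  by_cases hab : (fun i : Fin (k + 1) => pairE (w i) (embGZ Γ a)) =
      fun i : Fin (k + 1) => pairE (w i) (embGZ Γ b)
  · obtain rfl := hanti a b (congrArg toLex hab).le (congrArg toLex hab.symm).le
    exact iff_of_true le_rfl le_rfl
  · have := Pi.toLex_le_iff_comp_castLE_le (Nat.succ_le_succ hkN)
      (f := fun i : Fin (N + 1) => pairE (w' i) (embGZ Γ a))
      (g := fun i : Fin (N + 1) => pairE (w' i) (embGZ Γ b)) (by rwa [hprefix, hprefix])
    rw [hprefix, hprefix] at this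
    exact this.symm

theorem flagRel_antisymm_of_simplicial {n : ℕ} (Γ : AddSubgroup ℝ)
    {C : ℕ → Set (ℝ × (Fin n → ℝ))} (hsimp : IsSimplicialFlagOfCones n n C)
    {w : ℕ → ℝ × (Fin n → ℝ)} (hw : IsChoiceOfPoints n n C w) {a b : Γ × (Fin n → ℤ)}
    (hab : flagRel n n Γ w a b) (hba : flagRel n n Γ w b a) : a = b := by
  obtain ⟨-, v, hv, hvC⟩ := hsimp
  let e := basisOfLinearIndependentOfCardEqFinrank hv (by simp [add_comm])
  have hw' : IsChoiceOfPoints n n (fun i => coneGenUpTo e i) w := by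
    rw [coe_basisOfLinearIndependentOfCardEqFinrank]
    exact hw.congr hvC
  have hspan : Submodule.span ℝ (Set.range fun i : Fin (n + 1) => w i) = ⊤ :=
    e.span_eq_top_of_mem_coneGenUpTo fun i => hw' i (Nat.lt_succ_iff.1 i.isLt)
  refine embGZ_injective Γ (pairELeft_injective (LinearMap.ext_on_range hspan fun i => ?_))
  exact congrFun (congrArg ofLex (le_antisymm hab hba)) i

theorem flag_preorder_antisymm_iff_complete_flag_general
    (n k : ℕ) (Γ : AddSubgroup ℝ)
    (P : ℕ → Set (Fin n → ℝ)) (hP : IsFlagOfPolyhedra n k P)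
    (hsimp : IsSimplicialFlagOfCones n k (fun i => closedConeOver (P i)))
    (w : ℕ → ℝ × (Fin n → ℝ))
    (hw : IsChoiceOfPoints n k (fun i => closedConeOver (P i)) w) :
    (∀ a b : Γ × (Fin n → ℤ), flagRel n k Γ w a b → flagRel n k Γ w b a → a = b) ↔
      (∃ P' : ℕ → Set (Fin n → ℝ), IsFlagOfPolyhedra n n P' ∧
        IsSimplicialFlagOfCones n n (fun i => closedConeOver (P' i)) ∧
        ∃ w' : ℕ → ℝ × (Fin n → ℝ),
          IsChoiceOfPoints n n (fun i => closedConeOver (P' i)) w' ∧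
          ∀ a b : Γ × (Fin n → ℤ), flagRel n k Γ w a b ↔ flagRel n n Γ w' a b) := by
  refine ⟨fun hanti => ?_, ?_⟩
  · obtain ⟨P', hP', hsimp', hagree, u, hu⟩ :=
      exists_complete_flag_extending hsimp (hP.1 0 k.zero_le).1
    exact ⟨P', hP', hsimp', _, ((hw.congr fun i hi => (hagree i hi).symm).piecewise hu),
      flagRel_iff_of_antisymm hsimp.le Γ (fun i hi => if_pos hi) hanti⟩
  · rintro ⟨P', -, hsimp', w', hw', hiff⟩ a b hab hba
    exact flagRel_antisymm_of_simplicial Γ hsimp' hw' ((hiff a b).1 hab) ((hiff b a).1 hba)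

/-- The preorder on `Γ × ℤⁿ` associated to a flag of polyhedra `P` (with
`c(P)` simplicial) is antisymmetric (i.e. a valuated monomial order) iff it is the preorder
associated to some complete flag of polyhedra in `ℝⁿ` (with simplicial cone flag). -/
theorem flag_preorder_antisymm_iff_complete_flag
    (n k : ℕ) (hn : 1 ≤ n) (Γ : AddSubgroup ℝ) (hΓ : Γ ≠ ⊥)
    (P : ℕ → Set (Fin n → ℝ)) (hP : IsFlagOfPolyhedra n k P)
    (hsimp : IsSimplicialFlagOfCones n k (fun i => closedConeOver (P i)))
    (w : ℕ → ℝ × (Fin n → ℝ))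
    (hw : IsChoiceOfPoints n k (fun i => closedConeOver (P i)) w) :
    (∀ a b : Γ × (Fin n → ℤ), flagRel n k Γ w a b → flagRel n k Γ w b a → a = b) ↔
      (∃ P' : ℕ → Set (Fin n → ℝ), IsFlagOfPolyhedra n n P' ∧
        IsSimplicialFlagOfCones n n (fun i => closedConeOver (P' i)) ∧
        ∃ w' : ℕ → ℝ × (Fin n → ℝ),
          IsChoiceOfPoints n n (fun i => closedConeOver (P' i)) w' ∧
          ∀ a b : Γ × (Fin n → ℤ), flagRel n k Γ w a b ↔ flagRel n n Γ w' a b) :=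
  flag_preorder_antisymm_iff_complete_flag_general n k Γ P hP hsimp w hw

end
end

section
/- Let P_• = (P_0 ⊆ ⋯ ⊆ P_k) be a flag of polyhedra in ℝⁿ with c(P_•) simplicial. Write P_0 = {ξ_0}, and for 1 ≤ i ≤ k choose ζ_i ∈ P_i ∖ P_{i−1}. Let H = {u ∈ ℤⁿ : ⟨ξ_0,u⟩ ∈ Γ and ⟨ζ_i,u⟩ = ⟨ξ_0,u⟩ for all 1 ≤ i ≤ k}, a subgroup of ℤⁿ. Then the minimum of dim Q over all Γ-rational polyhedra Q that are Γ-rational neighborhoods of P_• exists and equals n − rank(H). -/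
open Finset

noncomputable section

/-!
Let `H^⊥ ⊆ ℝⁿ` be the real annihilator of `H`; it has dimension `n - rank H`. Simpliciality of
`c(P)` means that `P i` is cut out of `P (i + 1)` by an affine function which is positive on the
rest of `P (i + 1)`, including its relative interior. Hence `ξ0, ζ 1, …, ζ k`, and equally any
points `y i` in the relative interiors of the `P i`, affinely span `aff (P k)`, and an integral
linear form is constant on `aff (P k)` as soon as it is constant on one of these systems.

So `ξ0 + H^⊥` is a `Γ`-rational neighborhood of dimension `n - rank H`. Conversely, if `Q` is a
`Γ`-rational neighborhood containing such points `y i`, each inequality of `Q` that is tight on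
all of `Q` is tight at the `y i`, hence at `ξ0` and the `ζ i`, so its normal lies in `H`; thus
`aff Q` contains a translate of `H^⊥`.
-/

open Filter Topology Module

theorem AffineMap.apply_eq_of_mem_affineSpan {k V₁ P₁ V₂ P₂ : Type*} [Ring k]
    [AddCommGroup V₁] [Module k V₁] [AddTorsor V₁ P₁] [AddCommGroup V₂] [Module k V₂]
    [AddTorsor V₂ P₂] (f : P₁ →ᵃ[k] P₂) {s : Set P₁} {c : P₂} (hs : ∀ x ∈ s, f x = c)
    {x : P₁} (hx : x ∈ affineSpan k s) : f x = c := by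
  have hfx : f x ∈ affineSpan k (f '' s) :=
    AffineSubspace.map_span f s ▸ AffineSubspace.mem_map_of_mem f hx
  have hsub : f '' s ⊆ {c} := by
    rintro _ ⟨y, hy, rfl⟩
    exact hs y hy
  simpa using affineSpan_mono k hsub hfx

theorem LinearIndependent.exists_linearMap_apply_eq_ite {ι K V : Type*} [Field K]
    [AddCommGroup V] [Module K V] [DecidableEq ι] {v : ι → V} (hv : LinearIndependent K v)
    (i : ι) : ∃ f : V →ₗ[K] K, ∀ j, f (v j) = if j = i then 1 else 0 := by
  obtain ⟨f, hf⟩ := LinearMap.exists_extend ((Finsupp.lapply i).comp hv.repr)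
  refine ⟨f, fun j => ?_⟩
  have := LinearMap.congr_fun hf ⟨v j, Submodule.subset_span ⟨j, rfl⟩⟩
  simpa [hv.repr_eq_single j ⟨v j, _⟩ rfl, Finsupp.single_apply] using this

section Chain

variable {K V : Type*} [Field K] [AddCommGroup V] [Module K V] [FiniteDimensional K V]

theorem affineSpan_image_Iic_eq {A : ℕ → AffineSubspace K V} {k : ℕ}
    (hmono : ∀ i < k, A i ≤ A (i + 1)) (hdim : ∀ i ≤ k, finrank K (A i).direction = i)
    {y : ℕ → V} (hy0 : y 0 ∈ A 0) (hy : ∀ i < k, y (i + 1) ∈ A (i + 1) ∧ y (i + 1) ∉ A i) :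
    ∀ i ≤ k, affineSpan K (y '' Set.Iic i) = A i := by
  intro i hi
  induction i with
  | zero =>
    have hdir : (A 0).direction = ⊥ := Submodule.finrank_eq_zero.mp (hdim 0 hi)
    have h0 : y '' Set.Iic 0 = {y 0} := by
      rw [← Set.image_singleton]
      congr 1
      ext j
      simp
    rw [h0]
    refine AffineSubspace.eq_of_direction_eq_of_nonempty_of_le ?_ ?_ ?_
    · simp [hdir, direction_affineSpan]
    · simp
    · simpa [affineSpan_le] using hy0
  | succ i ih =>
    obtain ⟨hyA, hynot⟩ := hy i hi
    have hspan : affineSpan K (y '' Set.Iic (i + 1)) = affineSpan K (insert (y (i + 1)) (A i)) := by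
      have hIic : Set.Iic (i + 1) = insert (i + 1) (Set.Iic i) := by
        ext j
        simp only [Set.mem_Iic, Set.mem_insert_iff]
        omega
      rw [← ih (by omega), affineSpan_insert_affineSpan, hIic, Set.image_insert_eq]
    have hle : affineSpan K (y '' Set.Iic (i + 1)) ≤ A (i + 1) := by
      rw [hspan, affineSpan_le]
      exact Set.insert_subset hyA (hmono i hi)
    have hlt : A i < affineSpan K (y '' Set.Iic (i + 1)) := by
      rw [hspan]
      refine lt_of_le_of_ne ?_ fun h => hynot ?_
      · simpa using affineSpan_mono K (Set.subset_insert (y (i + 1)) (A i : Set V))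
      · rw [h]
        exact subset_affineSpan K _ (Set.mem_insert _ _)
    have hne : (A i : Set V).Nonempty :=
      ⟨y i, ih (by omega) ▸ subset_affineSpan K _ ⟨i, Set.mem_Iic.mpr le_rfl, rfl⟩⟩
    have hfinrank :=
      Submodule.finrank_lt_finrank_of_lt (AffineSubspace.direction_lt_of_nonempty hlt hne)
    rw [hdim i (by omega)] at hfinrank
    refine AffineSubspace.eq_of_direction_eq_of_nonempty_of_le
      (Submodule.eq_of_le_of_finrank_le (AffineSubspace.direction_le hle) ?_)
      ⟨y (i + 1), subset_affineSpan K _ ⟨i + 1, Set.mem_Iic.mpr le_rfl, rfl⟩⟩ hle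
    rw [hdim (i + 1) hi]
    exact hfinrank

end Chain

section IntrinsicInterior

variable {V : Type*} [NormedAddCommGroup V] [NormedSpace ℝ V]

theorem exists_pos_add_smul_sub_mem_of_mem_intrinsicInterior {s : Set V} {x z : V}
    (hx : x ∈ intrinsicInterior ℝ s) (hz : z ∈ s) : ∃ δ : ℝ, 0 < δ ∧ x + δ • (x - z) ∈ s := by
  obtain ⟨x, hx, rfl⟩ := hx
  let f : ℝ → affineSpan ℝ s := fun t =>
    ⟨t • ((x : V) - z) + x,
      AffineSubspace.smul_vsub_vadd_mem _ t x.2 (subset_affineSpan ℝ s hz) x.2⟩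
  have hf : Continuous f := by fun_prop
  have hf0 : f 0 = x := by ext; simp [f]
  have hnhds : ∀ᶠ t in 𝓝[>] 0, f t ∈ interior (Subtype.val ⁻¹' s) :=
    nhdsWithin_le_nhds (hf.continuousAt.preimage_mem_nhds (hf0 ▸ isOpen_interior.mem_nhds hx))
  obtain ⟨δ, hδ, hδpos⟩ := (hnhds.and self_mem_nhdsWithin).exists
  exact ⟨δ, hδpos, by simpa [f, add_comm] using interior_subset hδ⟩

theorem AffineMap.pos_of_mem_intrinsicInterior {s : Set V} (g : V →ᵃ[ℝ] ℝ)
    (hg : ∀ y ∈ s, 0 ≤ g y) {z : V} (hz : z ∈ s) (hgz : 0 < g z) {x : V}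
    (hx : x ∈ intrinsicInterior ℝ s) : 0 < g x := by
  obtain ⟨δ, hδ, hmem⟩ := exists_pos_add_smul_sub_mem_of_mem_intrinsicInterior hx hz
  have hline : g (x + δ • (x - z)) = g x + δ * (g x - g z) := by
    rw [add_comm, ← vadd_eq_add, AffineMap.map_vadd, map_smul, ← vsub_eq_sub,
      AffineMap.linearMap_vsub]
    simp [add_comm]
  nlinarith [hg _ hmem, hg x (intrinsicInterior_subset hx), mul_pos hδ hgz]

end IntrinsicInterior

/-- From a relative interior point, where all inequalities that are not tight on `Q` are
strict, one can move a little along `w`. -/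
theorem mem_direction_affineSpan_of_implicitEq {V ι : Type*} [NormedAddCommGroup V]
    [NormedSpace ℝ V] [FiniteDimensional ℝ V] [Finite ι] (φ : ι → V →ₗ[ℝ] ℝ) (b : ι → ℝ)
    {Q : Set V} (hQ : Q = {x | ∀ l, φ l x ≤ b l}) (hne : Q.Nonempty) {w : V}
    (hw : ∀ l, (∀ x ∈ Q, φ l x = b l) → φ l w = 0) : w ∈ (affineSpan ℝ Q).direction := by
  have hconv : Convex ℝ Q := by
    rw [hQ, Set.ofPred_forall]
    exact convex_iInter fun l => convex_halfSpace_le (φ l).isLinear (b l)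
  obtain ⟨z, hz⟩ := hne.intrinsicInterior hconv
  have hzQ : z ∈ Q := intrinsicInterior_subset hz
  have hev : ∀ l, ∀ᶠ t in 𝓝 (0 : ℝ), φ l (z + t • w) ≤ b l := by
    intro l
    have hzl : φ l z ≤ b l := by rw [hQ] at hzQ; exact hzQ l
    by_cases himpl : ∀ x ∈ Q, φ l x = b l
    · exact Eventually.of_forall fun t => by simpa [hw l himpl] using hzl
    push Not at himpl
    obtain ⟨y, hyQ, hy⟩ := himpl
    let g : V →ᵃ[ℝ] ℝ := AffineMap.const ℝ V (b l) - (φ l).toAffineMap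
    have hg : ∀ x, g x = b l - φ l x := fun x => by simp [g]
    have hgQ : ∀ x ∈ Q, 0 ≤ g x := fun x hx => by
      rw [hQ] at hx
      simpa [hg] using hx l
    have hgy : 0 < g y := by
      rw [hg, sub_pos]
      exact (sub_nonneg.mp (hg y ▸ hgQ y hyQ)).lt_of_ne hy
    have hgz := g.pos_of_mem_intrinsicInterior hgQ hyQ hgy hz
    rw [hg, sub_pos] at hgz
    have hcont : Continuous fun t : ℝ => φ l (z + t • w) :=
      (φ l).continuous_of_finiteDimensional.comp (by fun_prop)
    exact (hcont.continuousAt.eventually_lt continuousAt_const (by simpa using hgz)).mono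
      fun t ht => ht.le
  have hmem : ∀ᶠ t in 𝓝[≠] (0 : ℝ), z + t • w ∈ Q := by
    rw [hQ]
    exact nhdsWithin_le_nhds (eventually_all.mpr hev)
  obtain ⟨t, ht, ht0⟩ := (hmem.and self_mem_nhdsWithin).exists
  have := AffineSubspace.vsub_mem_direction (subset_affineSpan ℝ Q ht) (subset_affineSpan ℝ Q hzQ)
  rw [vsub_eq_sub, add_sub_cancel_left] at this
  exact (Submodule.smul_mem_iff _ ht0).mp this

section Polyhedra

variable {n k : ℕ}

theorem IsPolyhedron.isClosed {P : Set (Fin n → ℝ)} (hP : IsPolyhedron P) : IsClosed P := by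
  obtain ⟨q, a, b, rfl⟩ := hP
  simp only [Set.ofPred_forall]
  exact isClosed_iInter fun l => isClosed_le (by fun_prop) continuous_const

theorem IsPolyhedron.convex {P : Set (Fin n → ℝ)} (hP : IsPolyhedron P) : Convex ℝ P := by
  obtain ⟨q, a, b, rfl⟩ := hP
  simp only [Set.ofPred_forall]
  refine convex_iInter fun l => convex_halfSpace_le ⟨fun x y => ?_, fun c x => ?_⟩ (b l)
  · simp [mul_add, sum_add_distrib]
  · simp [mul_sum, mul_left_comm]

theorem mk_one_mem_closedConeOver {P : Set (Fin n → ℝ)} {x : Fin n → ℝ} (hx : x ∈ P) :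
    ((1 : ℝ), x) ∈ closedConeOver P :=
  subset_closure ⟨1, x, hx, one_pos, by simp⟩

theorem mem_of_mk_one_mem_closedConeOver {P : Set (Fin n → ℝ)} (hP : IsClosed P)
    {x : Fin n → ℝ} (hx : ((1 : ℝ), x) ∈ closedConeOver P) : x ∈ P := by
  have hcont : ContinuousAt (fun w : ℝ × (Fin n → ℝ) => w.1⁻¹ • w.2) (1, x) := by
    fun_prop (disch := norm_num)
  have := mem_closure_image hcont hx
  simp only [inv_one, one_smul] at this
  refine closure_minimal ?_ hP this
  rintro _ ⟨_, ⟨l, y, hy, hl, rfl⟩, rfl⟩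
  simpa [smul_smul, inv_mul_cancel₀ hl.ne'] using hy

/-- In a simplicial flag `c(P i) = cone(v 0, …, v i)`, the coefficient of `v (i + 1)` at
`(1, x)` is an affine function of `x` cutting `P i` out of `P (i + 1)`. -/
theorem exists_affineMap_cutting_out_of_coneGenUpTo {P : ℕ → Set (Fin n → ℝ)}
    {v : Fin (k + 1) → ℝ × (Fin n → ℝ)} (hv : LinearIndependent ℝ v)
    (hC : ∀ i ≤ k, closedConeOver (P i) = coneGenUpTo v i) {i : ℕ} (hi : i < k)
    (hPi : IsClosed (P i)) :
    ∃ g : (Fin n → ℝ) →ᵃ[ℝ] ℝ, (∀ x ∈ P (i + 1), 0 ≤ g x) ∧ (∀ x ∈ P i, g x = 0) ∧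
      ∀ x ∈ P (i + 1), g x = 0 → x ∈ P i := by
  classical
  let i' : Fin (k + 1) := ⟨i + 1, by omega⟩
  obtain ⟨ℓ, hℓ⟩ := hv.exists_linearMap_apply_eq_ite i'
  have hcoeff : ∀ {j}, j ≤ k → ∀ {x}, x ∈ P j → ∃ lam : Fin (k + 1) → ℝ, (∀ m, 0 ≤ lam m) ∧
      (∀ m : Fin (k + 1), j < m → lam m = 0) ∧ ((1 : ℝ), x) = ∑ m, lam m • v m ∧
      ℓ (1, x) = lam i' := by
    intro j hj x hx
    obtain ⟨lam, hlam, hvan, hsum⟩ := hC j hj ▸ mk_one_mem_closedConeOver hx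
    exact ⟨lam, hlam, hvan, hsum, by simp [hsum, hℓ]⟩
  let g : (Fin n → ℝ) →ᵃ[ℝ] ℝ :=
    ℓ.toAffineMap.comp ((LinearMap.inr ℝ ℝ _).toAffineMap + AffineMap.const ℝ _ (1, 0))
  have hg : ∀ x, g x = ℓ (1, x) := fun x => by simp [g]
  refine ⟨g, fun x hx => ?_, fun x hx => ?_, fun x hx hx0 => ?_⟩
  · obtain ⟨lam, hlam, -, -, hx1⟩ := hcoeff hi hx
    rw [hg, hx1]
    exact hlam i'
  · obtain ⟨lam, -, hvan, -, hx1⟩ := hcoeff hi.le hx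
    rw [hg, hx1]
    exact hvan i' (by simp [i'])
  · obtain ⟨lam, hlam, hvan, hsum, hx1⟩ := hcoeff hi hx
    rw [hg, hx1] at hx0
    refine mem_of_mk_one_mem_closedConeOver hPi ?_
    rw [hC i hi.le]
    refine ⟨lam, hlam, fun m hm => ?_, hsum⟩
    rcases (Nat.succ_le_of_lt hm).eq_or_lt with h | h
    · rw [show m = i' from Fin.ext h.symm, hx0]
    · exact hvan m h

end Polyhedra

section Flag

variable {n k : ℕ} {P : ℕ → Set (Fin n → ℝ)}

theorem IsFlagOfPolyhedra.mono (hP : IsFlagOfPolyhedra n k P) {i j : ℕ} (hij : i ≤ j)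
    (hj : j ≤ k) : P i ⊆ P j := by
  induction j, hij using Nat.le_induction with
  | base => exact subset_rfl
  | succ j _ ih => exact (ih (by omega)).trans (hP.2 j hj)

theorem IsFlagOfPolyhedra.affineSpan_image_Iic (hP : IsFlagOfPolyhedra n k P)
    {y : ℕ → Fin n → ℝ} (hy0 : y 0 ∈ P 0)
    (hy : ∀ i < k, y (i + 1) ∈ P (i + 1) ∧ y (i + 1) ∉ affineSpan ℝ (P i)) :
    affineSpan ℝ (y '' Set.Iic k) = affineSpan ℝ (P k) :=
  affineSpan_image_Iic_eq (A := fun i => affineSpan ℝ (P i))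
    (fun i hi => affineSpan_mono ℝ (hP.2 i hi)) (fun i hi => (hP.1 i hi).2.2.2)
    (subset_affineSpan ℝ _ hy0)
    (fun i hi => ⟨subset_affineSpan ℝ _ (hy i hi).1, (hy i hi).2⟩) k le_rfl

theorem IsFlagOfPolyhedra.notMem_affineSpan_of_mem_diff (hP : IsFlagOfPolyhedra n k P)
    (hsimp : IsSimplicialFlagOfCones n k fun i => closedConeOver (P i)) {i : ℕ} (hi : i < k)
    {z : Fin n → ℝ} (hz : z ∈ P (i + 1) \ P i) : z ∉ affineSpan ℝ (P i) := by
  obtain ⟨-, v, hv, hC⟩ := hsimp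
  obtain ⟨g, -, hgP, hgeq⟩ :=
    exists_affineMap_cutting_out_of_coneGenUpTo hv hC hi (hP.1 i hi.le).2.1.isClosed
  exact fun hmem => hz.2 (hgeq z hz.1 (g.apply_eq_of_mem_affineSpan hgP hmem))

theorem IsFlagOfPolyhedra.notMem_affineSpan_of_mem_intrinsicInterior
    (hP : IsFlagOfPolyhedra n k P)
    (hsimp : IsSimplicialFlagOfCones n k fun i => closedConeOver (P i)) {i : ℕ} (hi : i < k)
    {z : Fin n → ℝ} (hz : z ∈ P (i + 1) \ P i) {x : Fin n → ℝ}
    (hx : x ∈ intrinsicInterior ℝ (P (i + 1))) : x ∉ affineSpan ℝ (P i) := by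
  obtain ⟨-, v, hv, hC⟩ := hsimp
  obtain ⟨g, hg0, hgP, hgeq⟩ :=
    exists_affineMap_cutting_out_of_coneGenUpTo hv hC hi (hP.1 i hi.le).2.1.isClosed
  have hgz : 0 < g z := (hg0 z hz.1).lt_of_ne' fun h => hz.2 (hgeq z hz.1 h)
  exact fun hmem => (g.pos_of_mem_intrinsicInterior hg0 hz.1 hgz hx).ne'
    (g.apply_eq_of_mem_affineSpan hgP hmem)

end Flag

section IntegerDuality

variable {n : ℕ}

def pairZLin (u : Fin n → ℤ) : Module.Dual ℝ (Fin n → ℝ) where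
  toFun x := pairZ x u
  map_add' x y := by simp [pairZ, add_mul, sum_add_distrib]
  map_smul' c x := by simp [pairZ, mul_sum, mul_assoc]

@[simp]
theorem pairZLin_apply (u : Fin n → ℤ) (x : Fin n → ℝ) : pairZLin u x = pairZ x u := rfl

def pairZHom (x : Fin n → ℝ) : (Fin n → ℤ) →+ ℝ where
  toFun u := pairZ x u
  map_zero' := by simp [pairZ]
  map_add' u v := by simp [pairZ, mul_add, sum_add_distrib]

def intPerp (H : AddSubgroup (Fin n → ℤ)) : Submodule ℝ (Fin n → ℝ) :=
  ⨅ u ∈ H, LinearMap.ker (pairZLin u)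

@[simp]
theorem mem_intPerp {H : AddSubgroup (Fin n → ℤ)} {x : Fin n → ℝ} :
    x ∈ intPerp H ↔ ∀ u ∈ H, pairZ x u = 0 := by
  simp [intPerp]

/-- The witness is a `ℤ`-basis of `H`. -/
theorem exists_basis_intPerp (H : AddSubgroup (Fin n → ℤ)) :
    ∃ (r : ℕ) (U : Fin r → Fin n → ℤ), r = finrank ℤ H ∧ (∀ j, U j ∈ H) ∧
      LinearIndependent ℝ (fun j => pairZLin (U j)) ∧
      ∀ x, x ∈ intPerp H ↔ ∀ j, pairZ x (U j) = 0 := by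
  let b := Module.finBasis ℤ (AddSubgroup.toIntSubmodule H)
  refine ⟨_, fun j => b j, rfl, fun j => (b j).2, ?_,
    fun x => ⟨fun hx j => mem_intPerp.mp hx _ (b j).2, fun hx => mem_intPerp.mpr fun u hu => ?_⟩⟩
  · have hZ : LinearIndependent ℤ (fun j => (b j : Fin n → ℤ)) :=
      b.linearIndependent.map' (AddSubgroup.toIntSubmodule H).subtype (Submodule.ker_subtype _)
    have hR : LinearIndependent ℝ (fun j => algebraMap ℤ ℝ ∘ (b j : Fin n → ℤ)) :=
      linearIndependent_algebraMap_comp_iff.mpr hZ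
    have hcomp : (fun j => pairZLin (b j : Fin n → ℤ)) =
        (dotProductEquiv ℝ (Fin n)).toLinearMap ∘ fun j => algebraMap ℤ ℝ ∘ (b j : Fin n → ℤ) := by
      ext j x
      simp [pairZ, dotProduct, mul_comm]
    rw [hcomp]
    exact hR.map' _ (dotProductEquiv ℝ (Fin n)).ker
  · have hsum := congrArg Subtype.val (b.sum_repr ⟨u, hu⟩)
    simp only [Submodule.coe_sum, Submodule.coe_smul] at hsum
    change pairZHom x u = 0
    rw [← hsum, map_sum]
    refine sum_eq_zero fun j _ => ?_
    rw [map_zsmul, show pairZHom x (b j) = 0 from hx j, smul_zero]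

theorem finrank_intPerp_add_finrank (H : AddSubgroup (Fin n → ℤ)) :
    finrank ℝ (intPerp H) + finrank ℤ H = n := by
  obtain ⟨r, U, hr, -, hind, hmem⟩ := exists_basis_intPerp H
  set W := Submodule.span ℝ (Set.range fun j => pairZLin (U j))
  have hperp : intPerp H = W.dualCoannihilator := by
    ext x
    rw [hmem, Submodule.mem_dualCoannihilator]
    refine ⟨fun hx φ hφ => ?_, fun hx j => hx _ (Submodule.subset_span ⟨j, rfl⟩)⟩
    have hW : W ≤ LinearMap.ker (Module.Dual.eval ℝ _ x) :=
      Submodule.span_le.mpr (by rintro _ ⟨j, rfl⟩; simpa using hx j)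
    simpa using hW hφ
  have hW : finrank ℝ W = r := by simpa using finrank_span_eq_card hind
  have hdual := Subspace.finrank_add_finrank_dualCoannihilator_eq W
  rw [Module.finrank_fin_fun] at hdual
  rw [hperp]
  omega

theorem isGammaRatPolyhedron_setOf_eq (Γ : AddSubgroup ℝ) {q : ℕ} (u : Fin q → Fin n → ℤ)
    (γ : Fin q → ℝ) (hγ : ∀ l, γ l ∈ Γ) :
    IsGammaRatPolyhedron Γ {x | ∀ l, pairZ x (u l) = γ l} := by
  refine ⟨q + q, Fin.append u (-u), Fin.append γ (-γ), ?_, ?_⟩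
  · exact (Fin.forall_fin_add _).mpr ⟨fun l => by simp [hγ], fun l => by
      simp only [Fin.append_right, Pi.neg_apply]
      exact Γ.neg_mem (hγ l)⟩
  · ext x
    simp only [Set.mem_ofPred_eq, Fin.forall_fin_add, Fin.append_left, Fin.append_right,
      Pi.neg_apply, le_antisymm_iff, forall_and]
    simp [pairZ, sum_neg_distrib]

theorem isGammaRatPolyhedron_mk'_intPerp (Γ : AddSubgroup ℝ) (H : AddSubgroup (Fin n → ℤ))
    {ξ : Fin n → ℝ} (hξ : ∀ u ∈ H, pairZ ξ u ∈ Γ) :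
    IsGammaRatPolyhedron Γ (AffineSubspace.mk' ξ (intPerp H) : Set (Fin n → ℝ)) := by
  obtain ⟨r, U, -, hUH, -, hmem⟩ := exists_basis_intPerp H
  convert isGammaRatPolyhedron_setOf_eq Γ U (fun j => pairZ ξ (U j)) (fun j => hξ _ (hUH j))
    using 1
  ext x
  simp only [SetLike.mem_coe, AffineSubspace.mem_mk', vsub_eq_sub, hmem, Set.mem_ofPred_eq,
    ← pairZLin_apply, map_sub, sub_eq_zero]

end IntegerDuality

section RationalNeighborhoods

variable {n k : ℕ} {Γ : AddSubgroup ℝ} {P : ℕ → Set (Fin n → ℝ)} {ξ0 : Fin n → ℝ}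
  {ζ : ℕ → Fin n → ℝ} {H : AddSubgroup (Fin n → ℤ)}

theorem finrank_intPerp_le_polyDim (hP : IsFlagOfPolyhedra n k P)
    (hsimp : IsSimplicialFlagOfCones n k fun i => closedConeOver (P i)) (hξ0 : ξ0 ∈ P 0)
    (hζ : ∀ i < k, ζ (i + 1) ∈ P (i + 1) \ P i)
    (hH : ∀ u : Fin n → ℤ, u ∈ H ↔
      (pairZ ξ0 u ∈ Γ ∧ ∀ i, 1 ≤ i → i ≤ k → pairZ (ζ i) u = pairZ ξ0 u))
    {Q : Set (Fin n → ℝ)} (hQ : IsGammaRatNbhd Γ k P Q) :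
    finrank ℝ (intPerp H) ≤ polyDim Q := by
  obtain ⟨⟨q, u, γ, hγ, hQeq⟩, hmeet⟩ := hQ
  choose! Y hYQ hY using hmeet
  have hspan : affineSpan ℝ (Y '' Set.Iic k) = affineSpan ℝ (P k) :=
    hP.affineSpan_image_Iic (intrinsicInterior_subset (hY 0 (Nat.zero_le k))) fun i hi =>
      ⟨intrinsicInterior_subset (hY (i + 1) hi),
        hP.notMem_affineSpan_of_mem_intrinsicInterior hsimp hi (hζ i hi) (hY (i + 1) hi)⟩
  have hmemH : ∀ l, (∀ x ∈ Q, pairZ x (u l) = γ l) → u l ∈ H := by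
    intro l hl
    have hconst : ∀ x ∈ P k, pairZ x (u l) = γ l := fun x hx =>
      (pairZLin (u l)).toAffineMap.apply_eq_of_mem_affineSpan (s := Y '' Set.Iic k)
        (by rintro _ ⟨j, hj, rfl⟩; exact hl _ (hYQ j hj))
        (hspan ▸ subset_affineSpan ℝ _ hx)
    have hξk := hconst ξ0 (hP.mono (Nat.zero_le k) le_rfl hξ0)
    refine (hH _).mpr ⟨hξk ▸ hγ l, fun i hi hik => ?_⟩
    obtain ⟨i, rfl⟩ : ∃ j, i = j + 1 := ⟨i - 1, by omega⟩
    rw [hξk, hconst _ (hP.mono hik le_rfl (hζ i hik).1)]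
  exact Submodule.finrank_mono fun w hw =>
    mem_direction_affineSpan_of_implicitEq (fun l => pairZLin (u l)) γ hQeq
      ⟨Y 0, hYQ 0 (Nat.zero_le k)⟩ fun l hl => mem_intPerp.mp hw _ (hmemH l hl)

theorem exists_isGammaRatNbhd_polyDim_eq (hP : IsFlagOfPolyhedra n k P)
    (hsimp : IsSimplicialFlagOfCones n k fun i => closedConeOver (P i)) (hξ0 : ξ0 ∈ P 0)
    (hζ : ∀ i < k, ζ (i + 1) ∈ P (i + 1) \ P i)
    (hH : ∀ u : Fin n → ℤ, u ∈ H ↔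
      (pairZ ξ0 u ∈ Γ ∧ ∀ i, 1 ≤ i → i ≤ k → pairZ (ζ i) u = pairZ ξ0 u)) :
    ∃ Q, IsGammaRatNbhd Γ k P Q ∧ polyDim Q = finrank ℝ (intPerp H) := by
  let y : ℕ → Fin n → ℝ := fun i => if i = 0 then ξ0 else ζ i
  have hspan : affineSpan ℝ (y '' Set.Iic k) = affineSpan ℝ (P k) :=
    hP.affineSpan_image_Iic (by simpa [y] using hξ0) fun i hi => by
      simpa [y] using ⟨(hζ i hi).1, hP.notMem_affineSpan_of_mem_diff hsimp hi (hζ i hi)⟩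
  refine ⟨AffineSubspace.mk' ξ0 (intPerp H),
    ⟨isGammaRatPolyhedron_mk'_intPerp Γ H fun u hu => ((hH u).mp hu).1, fun i hi => ?_⟩,
    by rw [polyDim, AffineSubspace.affineSpan_coe, AffineSubspace.direction_mk']⟩
  obtain ⟨x, hx⟩ := (hP.1 i hi).1.intrinsicInterior (hP.1 i hi).2.1.convex
  refine ⟨x, ?_, hx⟩
  simp only [SetLike.mem_coe, AffineSubspace.mem_mk', vsub_eq_sub, mem_intPerp]
  intro u hu
  have hconst : pairZ x u = pairZ ξ0 u :=
    (pairZLin u).toAffineMap.apply_eq_of_mem_affineSpan (s := y '' Set.Iic k)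
      (by
        rintro _ ⟨j, hj, rfl⟩
        by_cases hj0 : j = 0
        · simp [y, hj0]
        · simpa [y, hj0] using ((hH u).mp hu).2 j (by omega) hj)
      (hspan ▸ subset_affineSpan ℝ _ (hP.mono hi le_rfl (intrinsicInterior_subset hx)))
  rw [← pairZLin_apply, map_sub, pairZLin_apply, pairZLin_apply, hconst, sub_self]

end RationalNeighborhoods

theorem min_dim_of_rational_nbhds_general
    (n k : ℕ) (Γ : AddSubgroup ℝ)
    (P : ℕ → Set (Fin n → ℝ)) (hP : IsFlagOfPolyhedra n k P)
    (hsimp : IsSimplicialFlagOfCones n k (fun i => closedConeOver (P i)))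
    (ξ0 : Fin n → ℝ) (hξ0 : P 0 = {ξ0})
    (ζ : ℕ → (Fin n → ℝ)) (hζ : ∀ i, 1 ≤ i → i ≤ k → ζ i ∈ P i \ P (i - 1))
    (H : AddSubgroup (Fin n → ℤ))
    (hH : ∀ u : Fin n → ℤ, u ∈ H ↔
      (pairZ ξ0 u ∈ Γ ∧ ∀ i, 1 ≤ i → i ≤ k → pairZ (ζ i) u = pairZ ξ0 u)) :
    IsLeast {d : ℕ | ∃ Q : Set (Fin n → ℝ), IsGammaRatNbhd Γ k P Q ∧ d = polyDim Q}
      (n - Module.finrank ℤ H) := by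
  have hξ0' : ξ0 ∈ P 0 := hξ0 ▸ rfl
  have hζ' : ∀ i < k, ζ (i + 1) ∈ P (i + 1) \ P i := fun i hi => hζ (i + 1) (by omega) hi
  have hrank := finrank_intPerp_add_finrank H
  refine ⟨?_, ?_⟩
  · obtain ⟨Q, hQ, hdim⟩ := exists_isGammaRatNbhd_polyDim_eq hP hsimp hξ0' hζ' hH
    exact ⟨Q, hQ, by omega⟩
  · rintro d ⟨Q, hQ, rfl⟩
    have := finrank_intPerp_le_polyDim hP hsimp hξ0' hζ' hH hQ
    omega

/-- For a flag of polyhedra `P` with `c(P)` simplicial, `P 0 = {ξ0}` and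
chosen `ζ i ∈ P i \ P (i-1)`, the minimum dimension of a `Γ`-rational polyhedron which is a
`Γ`-rational neighborhood of the flag exists and equals `n - rank H`, where
`H = {u ∈ ℤⁿ : ⟨ξ0,u⟩ ∈ Γ and ⟨ζ i,u⟩ = ⟨ξ0,u⟩ for 1 ≤ i ≤ k}`. -/
theorem min_dim_of_rational_nbhds
    (n k : ℕ) (hn : 1 ≤ n) (Γ : AddSubgroup ℝ) (hΓ : Γ ≠ ⊥)
    (P : ℕ → Set (Fin n → ℝ)) (hP : IsFlagOfPolyhedra n k P)
    (hsimp : IsSimplicialFlagOfCones n k (fun i => closedConeOver (P i)))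
    (ξ0 : Fin n → ℝ) (hξ0 : P 0 = {ξ0})
    (ζ : ℕ → (Fin n → ℝ)) (hζ : ∀ i, 1 ≤ i → i ≤ k → ζ i ∈ P i \ P (i - 1))
    (H : AddSubgroup (Fin n → ℤ))
    (hH : ∀ u : Fin n → ℤ, u ∈ H ↔
      (pairZ ξ0 u ∈ Γ ∧ ∀ i, 1 ≤ i → i ≤ k → pairZ (ζ i) u = pairZ ξ0 u)) :
    IsLeast {d : ℕ | ∃ Q : Set (Fin n → ℝ), IsGammaRatNbhd Γ k P Q ∧ d = polyDim Q}
      (n - Module.finrank ℤ H) :=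
  min_dim_of_rational_nbhds_general n k Γ P hP hsimp ξ0 hξ0 ζ hζ H hH

end
end
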